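/- Let N ≥ T ≥ 500 be natural numbers, set a = √(2·log N), b = √(2·log T − 2·log(3·2^{−3/2}·(2·log T)^{3/2})), and β = (b + ei(b)/Φᶜ(b)) / (1/(√(2π)·a²) + a). Then 0 < β and β ≤ 1 − 1/(√(2π)·a³). -/

import Mathlib

open MeasureTheory

/-- The standard normal density `φ(x) = (2π)^{-1/2} exp(-x²/2)`. -/
noncomputable def stdNormalPDF (x : ℝ) : ℝ :=
  (Real.sqrt (2 * Real.pi))⁻¹ * Real.exp (-x ^ 2 / 2)

/-- The standard normal complementary CDF `Φᶜ(x) = ∫_x^∞ φ(u) du`. -/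
noncomputable def stdNormalCCDF (x : ℝ) : ℝ :=
  ∫ u in Set.Ioi x, stdNormalPDF u

/-- The standard expected improvement `ei(x) = φ(x) - x·Φᶜ(x)`. -/
noncomputable def stdEI (x : ℝ) : ℝ :=
  stdNormalPDF x - x * stdNormalCCDF x

/-!
The numerator `b + ei(b)/Φᶜ(b)` is the inverse Mills ratio `φ(b)/Φᶜ(b)`, which Gordon's
inequality `Φᶜ(b) ≥ b φ(b)/(1 + b²)` bounds by `b + 1/b`. Multiplying out the denominator, the
upper bound on `β` becomes `b + 1/b ≤ a − 1/(2π a⁵)`. With `L = 2 log T ≤ a²` one has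
`b² = L − log (9/8) − 3 log L`, so the gap `√L − b ≈ 3 log L / (2√L)` beats `1/b + 1/(2π a⁵)`
as soon as `log L ≥ 2`.
-/

open Real Set Filter Topology

lemma stdNormalPDF_pos (x : ℝ) : 0 < stdNormalPDF x := by
  unfold stdNormalPDF
  positivity

lemma integrable_stdNormalPDF : Integrable stdNormalPDF := by
  convert (integrable_exp_neg_mul_sq (b := 2⁻¹) (by norm_num)).const_mul (√(2 * π))⁻¹
    using 2 with x
  rw [stdNormalPDF]
  ring_nf

lemma hasDerivAt_stdNormalPDF (x : ℝ) : HasDerivAt stdNormalPDF (-x * stdNormalPDF x) x := by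
  refine ((((hasDerivAt_pow 2 x).neg.div_const 2).exp).const_mul (√(2 * π))⁻¹).congr_deriv ?_
  simp only [stdNormalPDF, Pi.neg_apply]
  ring

lemma tendsto_stdNormalPDF_atTop : Tendsto stdNormalPDF atTop (𝓝 0) := by
  have h : Tendsto (fun x : ℝ => -x ^ 2 / 2) atTop atBot :=
    (tendsto_neg_atTop_atBot.comp (tendsto_pow_atTop two_ne_zero)).atBot_div_const two_pos
  rw [← mul_zero (√(2 * π))⁻¹]
  exact (tendsto_exp_atBot.comp h).const_mul _

lemma stdNormalCCDF_pos (x : ℝ) : 0 < stdNormalCCDF x := by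
  rw [stdNormalCCDF, setIntegral_pos_iff_support_of_nonneg_ae
    (ae_of_all _ fun u => (stdNormalPDF_pos u).le) integrable_stdNormalPDF.integrableOn]
  simp [Function.support_eq_univ fun u => (stdNormalPDF_pos u).ne']

lemma add_stdEI_div_stdNormalCCDF (x : ℝ) :
    x + stdEI x / stdNormalCCDF x = stdNormalPDF x / stdNormalCCDF x := by
  have hΦ := (stdNormalCCDF_pos x).ne'
  rw [stdEI]
  field_simp
  ring

lemma mul_stdNormalPDF_le_stdNormalCCDF {b : ℝ} (hb : 0 < b) :
    b * stdNormalPDF b ≤ (1 + b ^ 2) * stdNormalCCDF b := by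
  -- integrate `(-φ(u)/u)' = (1 + u⁻²) φ(u) ≤ (1 + b⁻²) φ(u)` over `(b, ∞)`
  set g' : ℝ → ℝ := fun u => (1 + (u ^ 2)⁻¹) * stdNormalPDF u
  have hderiv : ∀ u ∈ Ici b, HasDerivAt (fun u => -(stdNormalPDF u / u)) (g' u) u := by
    intro u hu
    have hu0 : u ≠ 0 := (hb.trans_le hu).ne'
    refine ((hasDerivAt_stdNormalPDF u).div (hasDerivAt_id u) hu0).neg.congr_deriv ?_
    simp only [g', id]
    field_simp
    ring
  have hg'_nonneg : ∀ u ∈ Ioi b, 0 ≤ g' u := fun u _ => by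
    have := stdNormalPDF_pos u
    positivity
  have hlim : Tendsto (fun u => -(stdNormalPDF u / u)) atTop (𝓝 0) := by
    simpa [div_eq_mul_inv] using (tendsto_stdNormalPDF_atTop.mul tendsto_inv_atTop_zero).neg
  have hle : ∀ u ∈ Ioi b, g' u ≤ (1 + (b ^ 2)⁻¹) * stdNormalPDF u := fun u hu => by
    have : (u ^ 2)⁻¹ ≤ (b ^ 2)⁻¹ := by gcongr; exact (mem_Ioi.1 hu).le
    exact mul_le_mul_of_nonneg_right (by linarith) (stdNormalPDF_pos u).le
  have hint := setIntegral_mono_on (integrableOn_Ioi_deriv_of_nonneg' hderiv hg'_nonneg hlim)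
    (integrable_stdNormalPDF.integrableOn.const_mul _) measurableSet_Ioi hle
  rw [integral_Ioi_of_hasDerivAt_of_nonneg' hderiv hg'_nonneg hlim, integral_const_mul] at hint
  rw [stdNormalCCDF]
  field_simp at hint
  linarith

lemma stdNormalPDF_div_stdNormalCCDF_le {b : ℝ} (hb : 0 < b) :
    stdNormalPDF b / stdNormalCCDF b ≤ b + b⁻¹ := by
  rw [div_le_iff₀ (stdNormalCCDF_pos b)]
  have hb' : b + b⁻¹ = (1 + b ^ 2) / b := by field_simp; ring
  rw [hb', div_mul_eq_mul_div, le_div_iff₀ hb]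
  linarith [mul_stdNormalPDF_le_stdNormalCCDF hb]

lemma exp_two_le_two_mul_log {t : ℝ} (ht : 55 ≤ t) : exp 2 ≤ 2 * log t := by
  have he1 := exp_one_lt_d9
  have h2 : exp 2 ≤ 7.39 := by
    rw [show (2 : ℝ) = 1 + 1 by norm_num, exp_add]
    nlinarith [exp_pos 1]
  have h4 : exp 4 ≤ t := by
    rw [show (4 : ℝ) = 2 + 2 by norm_num, exp_add]
    nlinarith [exp_pos 2]
  linarith [(le_log_iff_exp_le (by linarith)).2 h4]

lemma two_mul_log_three_mul_rpow {L : ℝ} (hL : 0 < L) :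
    2 * log (3 * (2 : ℝ) ^ (-(3 : ℝ) / 2) * L ^ ((3 : ℝ) / 2)) = log (9 / 8) + 3 * log L := by
  rw [log_mul (by positivity) (by positivity), log_mul (by norm_num) (by positivity),
    log_rpow two_pos, log_rpow hL, show (9 : ℝ) / 8 = 3 ^ 2 / 2 ^ 3 by norm_num,
    log_div (by norm_num) (by norm_num), log_pow, log_pow]
  push_cast
  ring

lemma log_nine_div_eight_le : log (9 / 8) ≤ 1 / 8 := by
  linarith [log_le_sub_one_of_pos (by norm_num : (0 : ℝ) < 9 / 8)]

lemma four_mul_le_mul_sub_log {L c : ℝ} (hL : exp 2 ≤ L) (hc : c ≤ 1 / 8) :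
    4 * L ≤ 9 * log L ^ 2 * (L - c - 3 * log L) := by
  have hL0 : 0 < L := (exp_pos 2).trans_le hL
  set s := log L
  have hs : 2 ≤ s := (le_log_iff_exp_le hL0).2 hL
  have he2 : 7.38 ≤ exp 2 := by
    rw [show (2 : ℝ) = 1 + 1 by norm_num, exp_add]
    nlinarith [exp_one_gt_d9]
  have hLs : 7.38 * (s - 1) ≤ L := by
    have h : exp 2 * (s - 1) ≤ exp s := by
      rw [show s = 2 + (s - 2) by ring, exp_add]
      nlinarith [add_one_le_exp (s - 2), exp_pos 2]
    rw [exp_log hL0] at h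
    nlinarith
  nlinarith [mul_le_mul_of_nonneg_left hLs (show 0 ≤ 9 * s ^ 2 - 4 by nlinarith),
    mul_nonneg (sub_nonneg.2 hs) (sub_nonneg.2 hs), mul_le_mul_of_nonneg_left hc (sq_nonneg s)]

lemma sub_log_nine_div_eight_sub_three_mul_log_pos {L : ℝ} (hL : exp 2 ≤ L) :
    0 < L - log (9 / 8) - 3 * log L := by
  have h := four_mul_le_mul_sub_log hL log_nine_div_eight_le
  by_contra! h'
  nlinarith [(exp_pos 2).trans_le hL, sq_nonneg (log L)]

lemma add_inv_add_le_sqrt {L b : ℝ} (hL : exp 2 ≤ L) (hb : 0 < b)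
    (hb2 : b ^ 2 = L - log (9 / 8) - 3 * log L) :
    b + b⁻¹ + 1 / (2 * π * √L ^ 5) ≤ √L := by
  have hM := four_mul_le_mul_sub_log hL log_nine_div_eight_le
  set c := log (9 / 8)
  set s := log L
  set x := √L
  have hL0 : 0 < L := (exp_pos 2).trans_le hL
  have hx0 : 0 < x := sqrt_pos.2 hL0
  have hx2 : x ^ 2 = L := sq_sqrt hL0.le
  have hc : 1 / 9 ≤ c := by
    have := one_sub_inv_le_log_of_pos (by norm_num : (0 : ℝ) < 9 / 8)
    norm_num at this ⊢
    linarith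
  have hs : 2 ≤ s := (le_log_iff_exp_le hL0).2 hL
  -- `x - b = (c + 3s)/(x + b) ≥ (c + 3s)/(2x)`, and `1/b ≤ 3s/(2x)` is the inequality `hM`
  have hbx : b ≤ x := by nlinarith
  have h1 : b⁻¹ ≤ 3 * s / (2 * x) := by
    have : 2 * x ≤ 3 * s * b := by nlinarith [show 0 < 2 * x + 3 * s * b by positivity]
    rw [inv_eq_one_div, div_le_div_iff₀ hb (by positivity)]
    linarith
  have h2 : 1 / (2 * π * x ^ 5) ≤ c / (2 * x) := by
    rw [div_le_div_iff₀ (by positivity) (by positivity)]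
    have : 1 ≤ c * π * x ^ 4 := by
      have hx4 : x ^ 4 = L ^ 2 := by rw [← hx2]; ring
      have hL3 : 3 ≤ L := by linarith [add_one_le_exp 2]
      have hcπ : 1 / 3 ≤ c * π := by nlinarith [pi_gt_three]
      nlinarith
    nlinarith
  have h3 : 3 * s / (2 * x) + c / (2 * x) ≤ x - b := by
    rw [← add_div, div_le_iff₀ (by positivity)]
    nlinarith
  linarith

/-- The 'choosing β' step in the proof of the paper's main theorem: the chosen
`β = (b − ei(b)/ei'(b)) / (1/(√(2π)a²) + a)` satisfies `0 < β ≤ 1 − 1/(√(2π)a³)`. -/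
theorem stmt14 (N T : ℕ) (hT : 500 ≤ T) (hN : T ≤ N)
    (a b β : ℝ) (ha : a = Real.sqrt (2 * Real.log N))
    (hb : b = Real.sqrt (2 * Real.log T
      - 2 * Real.log (3 * (2 : ℝ) ^ (-(3 : ℝ) / 2) * (2 * Real.log T) ^ ((3 : ℝ) / 2))))
    (hβ : β = (b + stdEI b / stdNormalCCDF b)
      / (1 / (Real.sqrt (2 * Real.pi) * a ^ 2) + a)) :
    0 < β ∧ β ≤ 1 - 1 / (Real.sqrt (2 * Real.pi) * a ^ 3) := by
  set L := 2 * log T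
  have hL : exp 2 ≤ L := exp_two_le_two_mul_log (by exact_mod_cast (by omega : 55 ≤ T))
  have hL0 : 0 < L := (exp_pos 2).trans_le hL
  rw [two_mul_log_three_mul_rpow hL0, ← sub_sub] at hb
  have hb0 : 0 < b := hb ▸ sqrt_pos.2 (sub_log_nine_div_eight_sub_three_mul_log_pos hL)
  have hb2 : b ^ 2 = L - log (9 / 8) - 3 * log L :=
    hb ▸ sq_sqrt (sub_log_nine_div_eight_sub_three_mul_log_pos hL).le
  have hLa : √L ≤ a := ha ▸ sqrt_le_sqrt (mul_le_mul_of_nonneg_left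
    (log_le_log (Nat.cast_pos.2 (by omega)) (Nat.cast_le.2 hN)) two_pos.le)
  have ha0 : 0 < a := (sqrt_pos.2 hL0).trans_le hLa
  have hden : (1 - 1 / (√(2 * π) * a ^ 3)) * (1 / (√(2 * π) * a ^ 2) + a)
      = a - 1 / (2 * π * a ^ 5) := by
    set S := √(2 * π)
    have hS : S ^ 2 = 2 * π := sq_sqrt (by positivity)
    have hS0 : 0 < S := by positivity
    rw [← hS]
    field_simp
    ring
  rw [hβ, add_stdEI_div_stdNormalCCDF]
  have hφ := stdNormalPDF_pos b
  have hΦ := stdNormalCCDF_pos b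
  refine ⟨by positivity, ?_⟩
  rw [div_le_iff₀ (by positivity), hden]
  calc stdNormalPDF b / stdNormalCCDF b ≤ b + b⁻¹ := stdNormalPDF_div_stdNormalCCDF_le hb0
    _ ≤ √L - 1 / (2 * π * √L ^ 5) := by linarith [add_inv_add_le_sqrt hL hb0 hb2]
    _ ≤ a - 1 / (2 * π * a ^ 5) := by gcongr
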